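/- Let L₀^♯ be a nondegenerate quadratic space over ℚ_p (p odd) containing a vector x₀ with [x₀,x₀] ∈ p·ℤ_p^×, and let L₀ := x₀^⊥. The map Λ ↦ Λ ⊕ ℤ_p(p⁻¹x₀) is a bijection from the set of vertex lattices in L₀ onto the set of vertex lattices Λ' in L₀^♯ with p⁻¹x₀ ∈ Λ'; the inverse is Λ' ↦ Λ' ∩ L₀. -/

import Mathlib

/-!
Put `y = p⁻¹x₀`, so that `p[y,y]` is a unit and `W = x₀^⊥ ⊕ ℚ_p y` orthogonally. For a lattice
`Λ ⊆ x₀^⊥` this gives `(Λ ⊕ ℤ_p y)^∨ = Λ^∨ ⊕ ℤ_p py`, so `Λ ⊕ ℤ_p y` is a vertex lattice exactly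
when `Λ` is one. Conversely, if `Λ'` is a vertex lattice containing `y`, then `py ∈ Λ'^∨`, so the
coefficient `[y,v]/[y,y] = p[y,v]/p[y,y]` of `y` in any `v ∈ Λ'` is integral, and
`Λ' = (Λ' ∩ x₀^⊥) ⊕ ℤ_p y`.
-/

/-- The dual lattice of a `ℤ_p`-lattice `Λ` inside the `ℚ_p`-subspace `L` of `W`,
with respect to the bilinear form `[v,w] = polar Q v w`:
`Λ^∨ = {v ∈ L : [v, Λ] ⊆ ℤ_p}`. -/
noncomputable def dualLattice {p : ℕ} [Fact p.Prime] {W : Type*} [AddCommGroup W]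
    [Module ℚ_[p] W] [Module ℤ_[p] W] [IsScalarTower ℤ_[p] ℚ_[p] W]
    (Q : QuadraticForm ℚ_[p] W) (L : Submodule ℚ_[p] W) (Λ : Submodule ℤ_[p] W) :
    Submodule ℤ_[p] W :=
  L.restrictScalars ℤ_[p] ⊓
    ⨅ w ∈ Λ, Submodule.comap
      (((QuadraticMap.polarBilin Q).flip w).restrictScalars ℤ_[p])
      (1 : Submodule ℤ_[p] ℚ_[p])

/-- `Λ` is a vertex lattice in the subspace `L`: a full `ℤ_p`-lattice in `L` with
`pΛ ⊆ Λ^∨ ⊆ Λ` (duals taken inside `L`). -/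
def IsVertexLattice {p : ℕ} [Fact p.Prime] {W : Type*} [AddCommGroup W]
    [Module ℚ_[p] W] [Module ℤ_[p] W] [IsScalarTower ℤ_[p] ℚ_[p] W]
    (Q : QuadraticForm ℚ_[p] W) (L : Submodule ℚ_[p] W) (Λ : Submodule ℤ_[p] W) : Prop :=
  (Λ : Set W) ⊆ (L : Set W) ∧ Submodule.span ℚ_[p] (Λ : Set W) = L ∧
  (∀ v ∈ Λ, (p : ℤ_[p]) • v ∈ dualLattice Q L Λ) ∧ dualLattice Q L Λ ≤ Λ

/-- The orthogonal complement of `x₀` with respect to the polar form of `Q`. -/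
noncomputable def perpSpace {p : ℕ} [Fact p.Prime] {W : Type*} [AddCommGroup W]
    [Module ℚ_[p] W] (Q : QuadraticForm ℚ_[p] W) (x₀ : W) : Submodule ℚ_[p] W :=
  LinearMap.BilinForm.orthogonal (QuadraticMap.polarBilin Q) (Submodule.span ℚ_[p] {x₀})

open QuadraticMap Submodule

section

variable {p : ℕ} [Fact p.Prime] {W : Type*} [AddCommGroup W] [Module ℚ_[p] W]

theorem PadicInt.mem_one_iff_norm_le_one {x : ℚ_[p]} :
    x ∈ (1 : Submodule ℤ_[p] ℚ_[p]) ↔ ‖x‖ ≤ 1 := by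
  rw [Submodule.mem_one]
  exact ⟨by rintro ⟨z, rfl⟩; exact z.2, fun h => ⟨⟨x, h⟩, rfl⟩⟩

section PerpSpace

variable (Q : QuadraticForm ℚ_[p] W)

theorem mem_perpSpace_iff {y w : W} : w ∈ perpSpace Q y ↔ polar Q y w = 0 := by
  rw [perpSpace, LinearMap.BilinForm.orthogonal_span_singleton_eq_toLin_ker]
  rfl

theorem perpSpace_smul {a : ℚ_[p]} (ha : a ≠ 0) (y : W) :
    perpSpace Q (a • y) = perpSpace Q y := by
  ext w
  simp only [mem_perpSpace_iff, polar_smul_left, smul_eq_mul, mul_eq_zero, ha, false_or]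

variable {Q} {y : W}

theorem sub_smul_mem_perpSpace (hy : polar Q y y ≠ 0) (v : W) :
    v - (polar Q y v / polar Q y y) • y ∈ perpSpace Q y := by
  rw [mem_perpSpace_iff, polar_sub_right, polar_smul_right, smul_eq_mul, div_mul_cancel₀ _ hy,
    sub_self]

theorem polar_self_ne_zero_of_norm_mul_eq_one (hy : ‖(p : ℚ_[p]) * polar Q y y‖ = 1) :
    polar Q y y ≠ 0 := by
  rintro h
  simp [h] at hy

theorem norm_polar_div_polar_self_le_one (hy : ‖(p : ℚ_[p]) * polar Q y y‖ = 1) {v : W}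
    (hv : ‖(p : ℚ_[p]) * polar Q y v‖ ≤ 1) : ‖polar Q y v / polar Q y y‖ ≤ 1 := by
  have hp : (p : ℚ_[p]) ≠ 0 := Nat.cast_ne_zero.2 (Fact.out : p.Prime).ne_zero
  rwa [← mul_div_mul_left _ _ hp, norm_div, hy, div_one]

end PerpSpace

variable [Module ℤ_[p] W] [IsScalarTower ℤ_[p] ℚ_[p] W]

theorem Submodule.smul_mem_of_norm_le_one (Λ : Submodule ℤ_[p] W) {a : ℚ_[p]} (ha : ‖a‖ ≤ 1)
    {v : W} (hv : v ∈ Λ) : a • v ∈ Λ :=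
  algebraMap_smul ℚ_[p] (show ℤ_[p] from ⟨a, ha⟩) v ▸ Λ.smul_mem _ hv

theorem Submodule.mem_sup_span_singleton_of_sub_smul_mem {Λ : Submodule ℤ_[p] W} {v y : W}
    {a : ℚ_[p]} (ha : ‖a‖ ≤ 1) (h : v - a • y ∈ Λ) : v ∈ Λ ⊔ span ℤ_[p] {y} := by
  rw [← sub_add_cancel v (a • y)]
  exact add_mem (mem_sup_left h)
    (mem_sup_right (smul_mem_of_norm_le_one _ ha (mem_span_singleton_self y)))

section DualLattice

variable (Q : QuadraticForm ℚ_[p] W)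

theorem mem_dualLattice_iff {L : Submodule ℚ_[p] W} {Λ : Submodule ℤ_[p] W} {v : W} :
    v ∈ dualLattice Q L Λ ↔ v ∈ L ∧ ∀ w ∈ Λ, ‖polar Q v w‖ ≤ 1 := by
  simp only [dualLattice, mem_inf, restrictScalars_mem, mem_iInf, mem_comap,
    LinearMap.restrictScalars_apply, LinearMap.flip_apply, polarBilin_apply_apply,
    PadicInt.mem_one_iff_norm_le_one]

theorem IsVertexLattice.norm_mul_polar_le_one {L : Submodule ℚ_[p] W} {Λ : Submodule ℤ_[p] W}
    (hΛ : IsVertexLattice Q L Λ) {v w : W} (hv : v ∈ Λ) (hw : w ∈ Λ) :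
    ‖(p : ℚ_[p]) * polar Q v w‖ ≤ 1 := by
  have h := ((mem_dualLattice_iff Q).1 (hΛ.2.2.1 v hv)).2 w hw
  rwa [Nat.cast_smul_eq_nsmul, ← Nat.cast_smul_eq_nsmul ℚ_[p], polar_smul_left,
    smul_eq_mul] at h

theorem mem_dualLattice_sup_span_singleton_iff {L : Submodule ℚ_[p] W} {Λ : Submodule ℤ_[p] W}
    {y v : W} (hvy : polar Q v y = 0) :
    v ∈ dualLattice Q L (Λ ⊔ span ℤ_[p] {y}) ↔ v ∈ dualLattice Q L Λ := by
  simp only [mem_dualLattice_iff]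
  refine ⟨fun ⟨hvL, h⟩ => ⟨hvL, fun w hw => h w (mem_sup_left hw)⟩, fun ⟨hvL, h⟩ => ⟨hvL, ?_⟩⟩
  intro w hw
  obtain ⟨w₀, hw₀, _, ht, rfl⟩ := mem_sup.1 hw
  obtain ⟨t, rfl⟩ := mem_span_singleton.1 ht
  rw [polar_add_right, polar_smul_right_of_tower, hvy, smul_zero, add_zero]
  exact h w₀ hw₀

theorem smul_mem_dualLattice_of_le {L L' : Submodule ℚ_[p] W} {Λ Λ' : Submodule ℤ_[p] W}
    (hΛ : (Λ : Set W) ⊆ L) (hle : Λ ≤ Λ')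
    (h : ∀ v ∈ Λ', (p : ℤ_[p]) • v ∈ dualLattice Q L' Λ') :
    ∀ v ∈ Λ, (p : ℤ_[p]) • v ∈ dualLattice Q L Λ := fun v hv =>
  (mem_dualLattice_iff Q).2 ⟨L.smul_of_tower_mem _ (hΛ hv),
    fun w hw => ((mem_dualLattice_iff Q).1 (h v (hle hv))).2 w (hle hw)⟩

end DualLattice

variable {Q : QuadraticForm ℚ_[p] W} {y : W}

theorem disjoint_span_singleton_perpSpace (hy : polar Q y y ≠ 0) :
    Disjoint (span ℤ_[p] {y}) ((perpSpace Q y).restrictScalars ℤ_[p]) := by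
  rw [disjoint_def]
  intro v hv hvy
  obtain ⟨t, rfl⟩ := mem_span_singleton.1 hv
  rw [restrictScalars_mem, mem_perpSpace_iff, polar_smul_right_of_tower, smul_eq_zero] at hvy
  simp [hvy.resolve_right hy]

theorem sup_span_singleton_inf_perpSpace (hy : polar Q y y ≠ 0) {Λ : Submodule ℤ_[p] W}
    (hΛ : (Λ : Set W) ⊆ perpSpace Q y) :
    (Λ ⊔ span ℤ_[p] {y}) ⊓ (perpSpace Q y).restrictScalars ℤ_[p] = Λ := by
  rw [sup_inf_assoc_of_le _ (show Λ ≤ (perpSpace Q y).restrictScalars ℤ_[p] from hΛ),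
    (disjoint_span_singleton_perpSpace hy).eq_bot, sup_bot_eq]

theorem span_sup_span_singleton_eq_top_iff (hy : polar Q y y ≠ 0) {Λ : Submodule ℤ_[p] W}
    (hΛ : (Λ : Set W) ⊆ perpSpace Q y) :
    span ℚ_[p] ((Λ ⊔ span ℤ_[p] {y} : Submodule ℤ_[p] W) : Set W) = ⊤ ↔
      span ℚ_[p] (Λ : Set W) = perpSpace Q y := by
  have hcompl : IsCompl (perpSpace Q y) (span ℚ_[p] {y}) :=
    (LinearMap.BilinForm.isCompl_span_singleton_orthogonal hy).symm
  rw [sup_span, span_span_of_tower, span_union]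
  constructor
  · intro h
    exact eq_of_le_of_inf_le_of_sup_le (span_le.2 hΛ) (by rw [hcompl.inf_eq_bot]; exact bot_le)
      (by rw [hcompl.sup_eq_top, h])
  · intro h
    rw [h, hcompl.sup_eq_top]

theorem dualLattice_le_of_sup_span_singleton (hy : polar Q y y ≠ 0) {Λ : Submodule ℤ_[p] W}
    (hΛ : (Λ : Set W) ⊆ perpSpace Q y)
    (h : dualLattice Q ⊤ (Λ ⊔ span ℤ_[p] {y}) ≤ Λ ⊔ span ℤ_[p] {y}) :
    dualLattice Q (perpSpace Q y) Λ ≤ Λ := by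
  intro v hv
  obtain ⟨hvL, hvΛ⟩ := (mem_dualLattice_iff Q).1 hv
  have hvy : polar Q v y = 0 := by rw [polar_comm]; exact (mem_perpSpace_iff Q).1 hvL
  rw [← sup_span_singleton_inf_perpSpace hy hΛ]
  exact ⟨h ((mem_dualLattice_sup_span_singleton_iff Q hvy).2
    ((mem_dualLattice_iff Q).2 ⟨trivial, hvΛ⟩)), hvL⟩

section

variable (hy : ‖(p : ℚ_[p]) * polar Q y y‖ = 1)
include hy

theorem inf_perpSpace_sup_span_singleton {L : Submodule ℚ_[p] W} {Λ' : Submodule ℤ_[p] W}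
    (hΛ' : IsVertexLattice Q L Λ') (hyΛ' : y ∈ Λ') :
    Λ' ⊓ (perpSpace Q y).restrictScalars ℤ_[p] ⊔ span ℤ_[p] {y} = Λ' := by
  refine le_antisymm (sup_le inf_le_left ((span_singleton_le_iff_mem _ _).2 hyΛ')) fun v hv => ?_
  have hc := norm_polar_div_polar_self_le_one hy (hΛ'.norm_mul_polar_le_one Q hyΛ' hv)
  exact mem_sup_span_singleton_of_sub_smul_mem hc
    ⟨sub_mem hv (smul_mem_of_norm_le_one _ hc hyΛ'),
      sub_smul_mem_perpSpace (polar_self_ne_zero_of_norm_mul_eq_one hy) v⟩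

theorem smul_mem_dualLattice_sup_span_singleton {Λ : Submodule ℤ_[p] W}
    (hΛ : (Λ : Set W) ⊆ perpSpace Q y)
    (h : ∀ v ∈ Λ, (p : ℤ_[p]) • v ∈ dualLattice Q (perpSpace Q y) Λ) :
    ∀ v ∈ Λ ⊔ span ℤ_[p] {y}, (p : ℤ_[p]) • v ∈ dualLattice Q ⊤ (Λ ⊔ span ℤ_[p] {y}) := by
  intro v hv
  refine (mem_dualLattice_iff Q).2 ⟨trivial, fun w hw => ?_⟩
  obtain ⟨v₀, hv₀, _, hs, rfl⟩ := mem_sup.1 hv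
  obtain ⟨s, rfl⟩ := mem_span_singleton.1 hs
  obtain ⟨w₀, hw₀, _, ht, rfl⟩ := mem_sup.1 hw
  obtain ⟨t, rfl⟩ := mem_span_singleton.1 ht
  have hv₀y : polar Q v₀ y = 0 := by rw [polar_comm]; exact (mem_perpSpace_iff Q).1 (hΛ hv₀)
  have hyw₀ : polar Q y w₀ = 0 := (mem_perpSpace_iff Q).1 (hΛ hw₀)
  simp only [polar_add_left, polar_add_right, polar_smul_left_of_tower,
    polar_smul_right_of_tower, hv₀y, hyw₀, smul_zero, add_zero, zero_add]
  have h₁ : ‖(p : ℤ_[p]) • polar Q v₀ w₀‖ ≤ 1 := by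
    simpa only [polar_smul_left_of_tower] using ((mem_dualLattice_iff Q).1 (h v₀ hv₀)).2 w₀ hw₀
  have h₂ : ‖t • (p : ℤ_[p]) • s • polar Q y y‖ ≤ 1 := by
    simp only [Algebra.smul_def, PadicInt.algebraMap_apply, PadicInt.coe_natCast]
    rw [show (t : ℚ_[p]) * (p * (s * polar Q y y)) = (t * s : ℤ_[p]) * (p * polar Q y y) by
      push_cast; ring, norm_mul, hy, mul_one, PadicInt.padic_norm_e_of_padicInt]
    exact (t * s).norm_le_one
  exact (IsUltrametricDist.norm_add_le_max _ _).trans (max_le h₁ h₂)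

theorem dualLattice_sup_span_singleton_le {Λ : Submodule ℤ_[p] W}
    (hΛ : (Λ : Set W) ⊆ perpSpace Q y) (h : dualLattice Q (perpSpace Q y) Λ ≤ Λ) :
    dualLattice Q ⊤ (Λ ⊔ span ℤ_[p] {y}) ≤ Λ ⊔ span ℤ_[p] {y} := by
  intro v hv
  have hvy := ((mem_dualLattice_iff Q).1 hv).2 y (mem_sup_right (mem_span_singleton_self y))
  have hc : ‖polar Q y v / polar Q y y‖ ≤ 1 := by
    refine norm_polar_div_polar_self_le_one hy (le_trans ?_ hvy)
    rw [norm_mul, polar_comm]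
    exact mul_le_of_le_one_left (norm_nonneg _) (Padic.norm_p_lt_one).le
  refine mem_sup_span_singleton_of_sub_smul_mem hc (h ((mem_dualLattice_iff Q).2
    ⟨sub_smul_mem_perpSpace (polar_self_ne_zero_of_norm_mul_eq_one hy) v, fun w hw => ?_⟩))
  rw [polar_sub_left, polar_smul_left, (mem_perpSpace_iff Q).1 (hΛ hw), smul_zero, sub_zero]
  exact ((mem_dualLattice_iff Q).1 hv).2 w (mem_sup_left hw)

theorem isVertexLattice_sup_span_singleton_iff {Λ : Submodule ℤ_[p] W}
    (hΛ : (Λ : Set W) ⊆ perpSpace Q y) :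
    IsVertexLattice Q ⊤ (Λ ⊔ span ℤ_[p] {y}) ↔ IsVertexLattice Q (perpSpace Q y) Λ := by
  have hy₀ := polar_self_ne_zero_of_norm_mul_eq_one hy
  constructor
  · rintro ⟨-, hspan, hsmul, hdual⟩
    exact ⟨hΛ, (span_sup_span_singleton_eq_top_iff hy₀ hΛ).1 hspan,
      smul_mem_dualLattice_of_le Q hΛ le_sup_left hsmul,
      dualLattice_le_of_sup_span_singleton hy₀ hΛ hdual⟩
  · rintro ⟨-, hspan, hsmul, hdual⟩
    exact ⟨fun _ _ => trivial, (span_sup_span_singleton_eq_top_iff hy₀ hΛ).2 hspan,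
      smul_mem_dualLattice_sup_span_singleton hy hΛ hsmul,
      dualLattice_sup_span_singleton_le hy hΛ hdual⟩

theorem isVertexLattice_inf_perpSpace {Λ' : Submodule ℤ_[p] W} (hΛ' : IsVertexLattice Q ⊤ Λ')
    (hyΛ' : y ∈ Λ') :
    IsVertexLattice Q (perpSpace Q y) (Λ' ⊓ (perpSpace Q y).restrictScalars ℤ_[p]) := by
  rw [← isVertexLattice_sup_span_singleton_iff hy fun _ hv => (mem_inf.1 hv).2,
    inf_perpSpace_sup_span_singleton hy hΛ' hyΛ']
  exact hΛ'

theorem bijOn_sup_span_singleton_isVertexLattice :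
    Set.BijOn (fun Λ : Submodule ℤ_[p] W => Λ ⊔ span ℤ_[p] {y})
      {Λ | IsVertexLattice Q (perpSpace Q y) Λ} {Λ' | IsVertexLattice Q ⊤ Λ' ∧ y ∈ Λ'} := by
  have hy₀ := polar_self_ne_zero_of_norm_mul_eq_one hy
  refine ⟨fun Λ hΛ => ⟨(isVertexLattice_sup_span_singleton_iff hy hΛ.1).2 hΛ,
      mem_sup_right (mem_span_singleton_self y)⟩, fun Λ₁ h₁ Λ₂ h₂ h => ?_,
    fun Λ' hΛ' => ⟨_, isVertexLattice_inf_perpSpace hy hΛ'.1 hΛ'.2,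
      inf_perpSpace_sup_span_singleton hy hΛ'.1 hΛ'.2⟩⟩
  rw [← sup_span_singleton_inf_perpSpace hy₀ h₁.1, ← sup_span_singleton_inf_perpSpace hy₀ h₂.1]
  exact congrArg (· ⊓ _) h

end

end

theorem stmt_6_general (p : ℕ) [Fact p.Prime]
    (W : Type*) [AddCommGroup W] [Module ℚ_[p] W] [Module ℤ_[p] W]
    [IsScalarTower ℤ_[p] ℚ_[p] W]
    (Q : QuadraticForm ℚ_[p] W)
    (x₀ : W)
    (hx₀ : ∃ u : ℤ_[p]ˣ, QuadraticMap.polar Q x₀ x₀ = (p : ℚ_[p]) * ((u : ℤ_[p]) : ℚ_[p])) :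
    Set.BijOn
      (fun Λ : Submodule ℤ_[p] W => Λ ⊔ Submodule.span ℤ_[p] {(p : ℚ_[p])⁻¹ • x₀})
      {Λ | IsVertexLattice Q (perpSpace Q x₀) Λ}
      {Λ' | IsVertexLattice Q ⊤ Λ' ∧ (p : ℚ_[p])⁻¹ • x₀ ∈ Λ'} ∧
    ∀ Λ' : Submodule ℤ_[p] W, IsVertexLattice Q ⊤ Λ' → (p : ℚ_[p])⁻¹ • x₀ ∈ Λ' →
      IsVertexLattice Q (perpSpace Q x₀)
        (Λ' ⊓ (perpSpace Q x₀).restrictScalars ℤ_[p]) ∧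
      (Λ' ⊓ (perpSpace Q x₀).restrictScalars ℤ_[p]) ⊔
        Submodule.span ℤ_[p] {(p : ℚ_[p])⁻¹ • x₀} = Λ' := by
  obtain ⟨u, hu⟩ := hx₀
  have hp : (p : ℚ_[p]) ≠ 0 := Nat.cast_ne_zero.2 (Fact.out : p.Prime).ne_zero
  have hy : ‖(p : ℚ_[p]) * polar Q ((p : ℚ_[p])⁻¹ • x₀) ((p : ℚ_[p])⁻¹ • x₀)‖ = 1 := by
    rw [polar_smul_left, polar_smul_right, hu, smul_eq_mul, smul_eq_mul,
      show (p : ℚ_[p]) * ((p : ℚ_[p])⁻¹ * ((p : ℚ_[p])⁻¹ * (p * u))) = u by field_simp,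
      PadicInt.padic_norm_e_of_padicInt, PadicInt.norm_units]
  rw [← perpSpace_smul Q (inv_ne_zero hp) x₀]
  exact ⟨bijOn_sup_span_singleton_isVertexLattice hy, fun Λ' hΛ' hyΛ' =>
    ⟨isVertexLattice_inf_perpSpace hy hΛ' hyΛ', inf_perpSpace_sup_span_singleton hy hΛ' hyΛ'⟩⟩

/-- Let `W = L₀^♯` be a nondegenerate quadratic space over `ℚ_p` (`p` odd),
`x₀ ∈ W` with `[x₀,x₀] ∈ p·ℤ_p^×`, and `L₀ = x₀^⊥`.  The map `Λ ↦ Λ ⊕ ℤ_p(p⁻¹x₀)` is a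
bijection from the set of vertex lattices in `L₀` onto the set of vertex lattices `Λ'` in
`L₀^♯` with `p⁻¹x₀ ∈ Λ'`, with inverse `Λ' ↦ Λ' ∩ L₀`. -/
theorem stmt_6 (p : ℕ) [Fact p.Prime] (hp : p ≠ 2)
    (W : Type*) [AddCommGroup W] [Module ℚ_[p] W] [Module ℤ_[p] W]
    [IsScalarTower ℤ_[p] ℚ_[p] W] [FiniteDimensional ℚ_[p] W]
    (Q : QuadraticForm ℚ_[p] W) (hQ : (QuadraticMap.polarBilin Q).Nondegenerate)
    (x₀ : W)
    (hx₀ : ∃ u : ℤ_[p]ˣ, QuadraticMap.polar Q x₀ x₀ = (p : ℚ_[p]) * ((u : ℤ_[p]) : ℚ_[p])) :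
    Set.BijOn
      (fun Λ : Submodule ℤ_[p] W => Λ ⊔ Submodule.span ℤ_[p] {(p : ℚ_[p])⁻¹ • x₀})
      {Λ | IsVertexLattice Q (perpSpace Q x₀) Λ}
      {Λ' | IsVertexLattice Q ⊤ Λ' ∧ (p : ℚ_[p])⁻¹ • x₀ ∈ Λ'} ∧
    ∀ Λ' : Submodule ℤ_[p] W, IsVertexLattice Q ⊤ Λ' → (p : ℚ_[p])⁻¹ • x₀ ∈ Λ' →
      IsVertexLattice Q (perpSpace Q x₀)
        (Λ' ⊓ (perpSpace Q x₀).restrictScalars ℤ_[p]) ∧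
      (Λ' ⊓ (perpSpace Q x₀).restrictScalars ℤ_[p]) ⊔
        Submodule.span ℤ_[p] {(p : ℚ_[p])⁻¹ • x₀} = Λ' :=
  stmt_6_general p W Q x₀ hx₀
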